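/- Let $A \in \mathbb{C}^{n \times n}$, $B \in \mathbb{C}^{n \times m}$, $C \in \mathbb{C}^{q \times n}$, $D \in \mathbb{C}^{q \times m}$, $G \in \mathbb{C}^{p \times p}$, $H \in \mathbb{C}^{p \times q}$. Suppose: (i) for every $\eta \in \mathbb{C}$ with $\operatorname{Re}(\eta) \ge 0$, $\operatorname{rank}[A - \eta I_n \;\; B] = n$; (ii) for every $\eta \in \mathbb{C}$, $\operatorname{rank}[H \;\; G - \eta I_p] = p$; (iii) for every eigenvalue $\eta$ of $G$, $\operatorname{rank}\begin{bmatrix} A - \eta I_n & B \\ C & D \end{bmatrix} = n + q$. Then for every $\eta \in \mathbb{C}$ with $\operatorname{Re}(\eta) \ge 0$, $\operatorname{rank}\begin{bmatrix} A - \eta I_n & 0 & B \\ HC & G - \eta I_p & HD \end{bmatrix} = n + p$. -/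

import Mathlib

/-! A left-kernel vector `(x, y)` of the augmented matrix satisfies `y (G - η I) = 0`. If `η` is
not an eigenvalue of `G` this forces `y = 0`. If it is, `(x, y H)` lies in the left kernel of the
Rosenbrock matrix `[A - η I, B; C, D]`, so `y H = 0` by (iii), and then `y [H, G - η I] = 0`
gives `y = 0` by (ii). Finally `x [A - η I, B] = 0`, so `x = 0` by (i). -/

namespace Matrix

variable {K : Type*} [Field K] {n m q p : Type*}

theorem rank_eq_card_iff_vecMul_eq_zero [Fintype n] [Fintype m] (M : Matrix n m K) :
    M.rank = Fintype.card n ↔ ∀ x : n → K, x ᵥ* M = 0 → x = 0 := by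
  rw [rank_eq_finrank_span_row, ← Set.finrank, eq_comm,
    ← linearIndependent_iff_card_eq_finrank_span, ← vecMul_injective_iff, ← coe_vecMulLinear,
    injective_iff_map_eq_zero]
  rfl

theorem sumElim_vecMul_fromBlocks_eq_zero_iff [Fintype n] [Fintype q] (P : Matrix n n K)
    (B : Matrix n m K) (C : Matrix q n K) (D : Matrix q m K) (x : n → K) (w : q → K) :
    Sum.elim x w ᵥ* fromBlocks P B C D = 0 ↔
      x ᵥ* P + w ᵥ* C = 0 ∧ x ᵥ* B + w ᵥ* D = 0 := by
  rw [vecMul_fromBlocks, ← Sum.elim_zero_zero, Sum.elim_eq_iff, Sum.elim_comp_inl,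
    Sum.elim_comp_inr]

theorem sumElim_vecMul_fromCols_fromBlocks_eq_zero_iff [Fintype n] [Fintype q] [Fintype p]
    (P : Matrix n n K) (B : Matrix n m K) (C : Matrix q n K) (D : Matrix q m K)
    (Q : Matrix p p K) (H : Matrix p q K) (x : n → K) (y : p → K) :
    Sum.elim x y ᵥ* fromCols (fromBlocks P 0 (H * C) Q) (fromRows B (H * D)) = 0 ↔
      x ᵥ* P + (y ᵥ* H) ᵥ* C = 0 ∧ y ᵥ* Q = 0 ∧ x ᵥ* B + (y ᵥ* H) ᵥ* D = 0 := by
  simp only [vecMul_fromCols, sumElim_vecMul_fromRows, vecMul_fromBlocks, ← Sum.elim_zero_zero,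
    Sum.elim_eq_iff, Sum.elim_comp_inl, Sum.elim_comp_inr, vecMul_vecMul, vecMul_zero, zero_add,
    and_assoc]

theorem eq_zero_of_vecMul_sub_smul_eq_zero [Fintype p] [DecidableEq p] {G : Matrix p p K} {η : K}
    (hη : η ∉ spectrum K G) {y : p → K} (hy : y ᵥ* (G - η • 1) = 0) : y = 0 := by
  have hunit : IsUnit (G - η • 1) := by
    simpa [Algebra.algebraMap_eq_smul_one] using (spectrum.notMem_iff.mp hη).neg
  exact vecMul_injective_of_isUnit hunit (hy.trans (zero_vecMul _).symm)

variable [Fintype n] [Fintype m] [Fintype q] [Fintype p] [DecidableEq n] [DecidableEq p]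
  {A : Matrix n n K} {B : Matrix n m K} {C : Matrix q n K} {D : Matrix q m K}
  {G : Matrix p p K} {H : Matrix p q K} {η : K}

theorem eq_zero_of_vecMul_sub_smul_eq_zero_of_rank_eq
    (hHG : (fromCols H (G - η • 1)).rank = Fintype.card p)
    (hR : η ∈ spectrum K G →
      (fromBlocks (A - η • 1) B C D).rank = Fintype.card n + Fintype.card q)
    {x : n → K} {y : p → K} (hA : x ᵥ* (A - η • 1) + (y ᵥ* H) ᵥ* C = 0)
    (hG : y ᵥ* (G - η • 1) = 0) (hB : x ᵥ* B + (y ᵥ* H) ᵥ* D = 0) : y = 0 := by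
  by_cases hη : η ∈ spectrum K G
  · have hxyH : Sum.elim x (y ᵥ* H) = 0 :=
      (rank_eq_card_iff_vecMul_eq_zero _).mp (by rw [hR hη, Fintype.card_sum]) _
        ((sumElim_vecMul_fromBlocks_eq_zero_iff _ _ _ _ _ _).mpr ⟨hA, hB⟩)
    rw [← Sum.elim_zero_zero, Sum.elim_eq_iff] at hxyH
    refine (rank_eq_card_iff_vecMul_eq_zero _).mp hHG y ?_
    rw [vecMul_fromCols, hxyH.2, hG, Sum.elim_zero_zero]
  · exact eq_zero_of_vecMul_sub_smul_eq_zero hη hG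

theorem rank_fromCols_fromBlocks_sub_smul_eq_card
    (hAB : (fromCols (A - η • 1) B).rank = Fintype.card n)
    (hHG : (fromCols H (G - η • 1)).rank = Fintype.card p)
    (hR : η ∈ spectrum K G →
      (fromBlocks (A - η • 1) B C D).rank = Fintype.card n + Fintype.card q) :
    (fromCols (fromBlocks (A - η • 1) 0 (H * C) (G - η • 1)) (fromRows B (H * D))).rank =
      Fintype.card n + Fintype.card p := by
  rw [← Fintype.card_sum, rank_eq_card_iff_vecMul_eq_zero]
  intro z hz
  rw [← Sum.elim_comp_inl_inr z, sumElim_vecMul_fromCols_fromBlocks_eq_zero_iff] at hz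
  obtain ⟨hA, hG, hB⟩ := hz
  obtain hy : z ∘ Sum.inr = 0 := eq_zero_of_vecMul_sub_smul_eq_zero_of_rank_eq hHG hR hA hG hB
  rw [hy, zero_vecMul, zero_vecMul, add_zero] at hA hB
  have hx : z ∘ Sum.inl = 0 := (rank_eq_card_iff_vecMul_eq_zero _).mp hAB _
    (by rw [vecMul_fromCols, hA, hB, Sum.elim_zero_zero])
  rw [← Sum.elim_comp_inl_inr z, hx, hy, Sum.elim_zero_zero]

end Matrix

open Matrix in
theorem stmt_4 (n m q p : ℕ)
    (A : Matrix (Fin n) (Fin n) ℂ) (B : Matrix (Fin n) (Fin m) ℂ)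
    (C : Matrix (Fin q) (Fin n) ℂ) (D : Matrix (Fin q) (Fin m) ℂ)
    (G : Matrix (Fin p) (Fin p) ℂ) (H : Matrix (Fin p) (Fin q) ℂ)
    (h1 : ∀ η : ℂ, 0 ≤ η.re → (fromCols (A - η • 1) B).rank = n)
    (h2 : ∀ η : ℂ, (fromCols H (G - η • 1)).rank = p)
    (h3 : ∀ η ∈ spectrum ℂ G, (fromBlocks (A - η • 1) B C D).rank = n + q) :
    ∀ η : ℂ, 0 ≤ η.re →
      (fromCols (fromBlocks (A - η • 1) 0 (H * C) (G - η • 1))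
        (fromRows B (H * D))).rank = n + p := by
  intro η hη
  have h := rank_fromCols_fromBlocks_sub_smul_eq_card (A := A) (B := B) (C := C) (D := D)
    (G := G) (H := H) (η := η)
  simp only [Fintype.card_fin] at h
  exact h (h1 η hη) (h2 η) (h3 η)
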